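/- Define b_i(n) = Σ_{j=1}^{n} binom(j−1, i)·w_j(n), where w_j(n) is the number of weakly increasing sequences (a_1,…,a_n) of positive integers with a_t ≤ t for all t and a_n = j. Then for all n ≥ 1 and all i ≥ 0, n·b_i(n) = binom(2n, n−i−1)·binom(n+i−1, i). In particular b_i(n) = (1/n)·binom(2n, n−i−1)·binom(n+i−1, i). -/

import Mathlib

/-- Minimal generators of `Borel(x_1 x_2 ⋯ x_n)`: weakly increasing sequences
`(a_1,…,a_n)` of positive integers with `a_t ≤ t` for all `t`. -/
def borelGens (n : ℕ) : Set (List ℕ) :=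
  {l | l.length = n ∧ l.Chain' (· ≤ ·) ∧
    ∀ t < l.length, 1 ≤ l.getD t 0 ∧ l.getD t 0 ≤ t + 1}

/-- `w n j`: the number of such sequences with `a_n = j`. -/
noncomputable def w (n j : ℕ) : ℕ :=
  Set.ncard {l ∈ borelGens n | l.getLast? = some j}

/-- `b n i = Σ_{j=1}^n binom(j-1,i)·w_j(n)`, the `i`-th total Betti number of
`Borel(x_1⋯x_n)` via the Eliahou–Kervaire formula. -/
noncomputable def b (n i : ℕ) : ℕ :=
  ∑ j ∈ Finset.Icc 1 n, Nat.choose (j - 1) i * w n j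

/-! Appending the last entry shows that `w` is the Catalan triangle:
`w (n+1) j = ∑_{k ≤ j} w n k`. Exchanging the order of summation and applying the hockey-stick
identity turns this into `b (n+1) i + b n (i+1) = binom(n+1, i+1) * b n 0`, which, with
`b 1 i = [i = 0]`, determines `n * b n i`. The closed form satisfies the same recurrence. -/

open Finset

lemma mem_borelGens_iff {n : ℕ} {l : List ℕ} :
    l ∈ borelGens n ↔ l.length = n ∧ l.IsChain (· ≤ ·) ∧
      ∀ t < l.length, 1 ≤ l.getD t 0 ∧ l.getD t 0 ≤ t + 1 :=
  Iff.rfl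

lemma one_le_of_mem_borelGens {n x : ℕ} {l : List ℕ} (hl : l ∈ borelGens n) (hx : x ∈ l) :
    1 ≤ x := by
  obtain ⟨t, ht, rfl⟩ := List.getElem_of_mem hx
  have := (hl.2.2 t ht).1
  rwa [List.getD_eq_getElem _ _ ht] at this

lemma append_singleton_mem_borelGens_iff {n j : ℕ} {l : List ℕ} :
    l ++ [j] ∈ borelGens (n + 1) ↔ l ∈ borelGens n ∧ l.getLast?.getD 1 ≤ j ∧ j ≤ n + 1 := by
  have bounds : (∀ t < (l ++ [j]).length,
        1 ≤ (l ++ [j]).getD t 0 ∧ (l ++ [j]).getD t 0 ≤ t + 1) ↔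
      (∀ t < l.length, 1 ≤ l.getD t 0 ∧ l.getD t 0 ≤ t + 1) ∧ 1 ≤ j ∧ j ≤ l.length + 1 := by
    rw [List.length_append, List.length_singleton, Nat.forall_lt_succ_right,
      List.getD_append_right _ _ _ _ le_rfl, Nat.sub_self, List.getD_cons_zero]
    refine and_congr (forall₂_congr fun t ht => ?_) Iff.rfl
    rw [List.getD_append _ _ _ _ ht]
  rw [mem_borelGens_iff, bounds, List.isChain_append, List.length_append, List.length_singleton,
    Nat.add_right_cancel_iff]
  constructor
  · rintro ⟨rfl, ⟨hchain, -, hlast⟩, hbounds, hj1, hj2⟩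
    refine ⟨⟨rfl, hchain, hbounds⟩, ?_, hj2⟩
    cases h : l.getLast? with
    | none => exact hj1
    | some x => exact hlast x h j rfl
  · rintro ⟨hl, hlast, hj⟩
    have hlast' : ∀ x ∈ l.getLast?, 1 ≤ x ∧ x ≤ j := fun x hx => by
      rw [Option.mem_def] at hx
      exact ⟨one_le_of_mem_borelGens hl (List.mem_of_getLast? hx), by simpa [hx] using hlast⟩
    obtain ⟨rfl, hchain, hbounds⟩ := hl
    refine ⟨rfl, ⟨hchain, List.isChain_singleton j, ?_⟩, hbounds, ?_, hj⟩
    · rintro x hx y ⟨⟩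
      exact (hlast' x hx).2
    · cases h : l.getLast? with
      | none => simpa [h] using hlast
      | some x => exact (hlast' x h).1.trans (hlast' x h).2

def borelGensFinset : ℕ → Finset (List ℕ)
  | 0 => {[]}
  | n + 1 => (borelGensFinset n).biUnion fun l =>
      (Icc (l.getLast?.getD 1) (n + 1)).image (l ++ [·])

lemma mem_borelGensFinset {n : ℕ} {l : List ℕ} : l ∈ borelGensFinset n ↔ l ∈ borelGens n := by
  induction n generalizing l with
  | zero =>
    simp only [borelGensFinset, mem_singleton, mem_borelGens_iff, List.length_eq_zero_iff]
    constructor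
    · rintro rfl
      simp
    · exact fun h => h.1
  | succ n ih =>
    rcases l.eq_nil_or_concat' with rfl | ⟨l, j, rfl⟩
    · simp [borelGensFinset, mem_borelGens_iff]
    · simp [borelGensFinset, append_singleton_mem_borelGens_iff, ih]

lemma w_eq_card (n j : ℕ) : w n j = #{l ∈ borelGensFinset n | l.getLast? = some j} := by
  rw [w, ← Set.ncard_coe_finset]
  congr 1
  ext l
  simp [mem_borelGensFinset]

lemma getLast?_mem_Icc_of_mem_borelGens {n k : ℕ} {l : List ℕ} (hl : l ∈ borelGens n)
    (hk : l.getLast? = some k) : k ∈ Icc 1 n := by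
  rcases l.eq_nil_or_concat' with rfl | ⟨l, j, rfl⟩
  · simp at hk
  obtain rfl : j = k := by simpa using hk
  obtain rfl : n = l.length + 1 := by simpa using hl.1.symm
  exact mem_Icc.2 ⟨one_le_of_mem_borelGens hl (by simp),
    (append_singleton_mem_borelGens_iff.1 hl).2.2⟩

lemma w_eq_zero_of_lt {n j : ℕ} (h : n < j) : w n j = 0 := by
  rw [w_eq_card, card_eq_zero, filter_eq_empty_iff]
  intro l hl hj
  have := mem_Icc.1 (getLast?_mem_Icc_of_mem_borelGens (mem_borelGensFinset.1 hl) hj)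
  omega

lemma exists_getLast?_eq_of_mem_borelGens {n : ℕ} {l : List ℕ} (hn : 1 ≤ n)
    (hl : l ∈ borelGens n) : ∃ k ∈ Icc 1 n, l.getLast? = some k := by
  rcases l.eq_nil_or_concat' with rfl | ⟨l, k, rfl⟩
  · have : 0 = n := hl.1
    omega
  · exact ⟨k, getLast?_mem_Icc_of_mem_borelGens hl List.getLast?_concat, List.getLast?_concat⟩

lemma filter_getLast?_borelGensFinset_succ {n j : ℕ} (hj : j ≤ n + 1) :
    {l ∈ borelGensFinset (n + 1) | l.getLast? = some j} =
      {l ∈ borelGensFinset n | l.getLast?.getD 1 ≤ j}.image (· ++ [j]) := by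
  ext l
  rcases l.eq_nil_or_concat' with rfl | ⟨l, k, rfl⟩
  · simp
  · simp only [mem_filter, mem_borelGensFinset, append_singleton_mem_borelGens_iff,
      List.getLast?_concat, Option.some.injEq, mem_image, List.append_singleton_inj,
      existsAndEq, true_and]
    constructor
    · rintro ⟨⟨hl, hk, -⟩, rfl⟩
      exact ⟨⟨hl, hk⟩, rfl⟩
    · rintro ⟨⟨hl, hk⟩, rfl⟩
      exact ⟨⟨hl, hk, hj⟩, rfl⟩

lemma w_succ {n j : ℕ} (hn : 1 ≤ n) (hj : j ≤ n + 1) :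
    w (n + 1) j = ∑ k ∈ Icc 1 j, w n k := by
  have hlast (l) (hl : l ∈ borelGensFinset n) : ∃ k ∈ Icc 1 n, l.getLast? = some k :=
    exists_getLast?_eq_of_mem_borelGens hn (mem_borelGensFinset.1 hl)
  rw [w_eq_card, filter_getLast?_borelGensFinset_succ hj,
    card_image_of_injective _ (List.append_left_injective _),
    card_eq_sum_card_fiberwise (f := fun l => l.getLast?.getD 1) (t := Icc 1 j)]
  · refine sum_congr rfl fun k hk => ?_
    rw [w_eq_card, filter_filter]
    refine congrArg card (filter_congr fun l hl => ?_)
    obtain ⟨k', -, hk'⟩ := hlast l hl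
    simp only [hk', Option.getD_some, Option.some_inj]
    have := mem_Icc.1 hk
    omega
  · intro l hl
    obtain ⟨hl, hlj⟩ := mem_filter.1 hl
    obtain ⟨k, hk, hk'⟩ := hlast l hl
    simp only [hk', Option.getD_some] at hlj ⊢
    exact mem_Icc.2 ⟨(mem_Icc.1 hk).1, hlj⟩

lemma w_one_one : w 1 1 = 1 := by
  rw [w_eq_card]
  decide

lemma sum_Icc_one_eq_sum_range {M : Type*} [AddCommMonoid M] (f : ℕ → M) (n : ℕ) :
    ∑ j ∈ Icc 1 n, f j = ∑ m ∈ range n, f (m + 1) := by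
  rw [range_eq_Ico, sum_Ico_add', ← Ico_add_one_right_eq_Icc, zero_add]

lemma sum_range_choose_eq_choose_succ (N i : ℕ) :
    ∑ m ∈ range N, m.choose i = N.choose (i + 1) := by
  induction N with
  | zero => simp
  | succ N ih => rw [sum_range_succ, ih, Nat.choose_succ_succ', add_comm]

lemma sum_Ico_choose_add_choose {k N : ℕ} (i : ℕ) (h : k ≤ N) :
    ∑ m ∈ Ico k N, m.choose i + k.choose (i + 1) = N.choose (i + 1) := by
  rw [← sum_range_choose_eq_choose_succ, ← sum_range_choose_eq_choose_succ,
    ← sum_range_add_sum_Ico _ h, add_comm]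

lemma b_eq_sum_range (n i : ℕ) : b n i = ∑ m ∈ range n, m.choose i * w n (m + 1) := by
  simp only [b, sum_Icc_one_eq_sum_range, Nat.add_sub_cancel]

lemma b_succ_add {n : ℕ} (hn : 1 ≤ n) (i : ℕ) :
    b (n + 1) i + b n (i + 1) = (n + 1).choose (i + 1) * b n 0 := by
  have hw : ∀ m ∈ range (n + 1), w (n + 1) (m + 1) = ∑ k ∈ range (m + 1), w n (k + 1) :=
    fun m hm => by rw [w_succ hn (by simpa using hm), sum_Icc_one_eq_sum_range]
  have hb : ∀ p, b n p = ∑ k ∈ range (n + 1), k.choose p * w n (k + 1) := fun p => by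
    rw [b_eq_sum_range, sum_range_succ, w_eq_zero_of_lt n.lt_succ_self, mul_zero, add_zero]
  calc b (n + 1) i + b n (i + 1)
      = ∑ m ∈ range (n + 1), ∑ k ∈ range (m + 1), m.choose i * w n (k + 1) + b n (i + 1) := by
        rw [b_eq_sum_range]
        exact congrArg (· + _) (sum_congr rfl fun m hm => by rw [hw m hm, mul_sum])
    _ = ∑ k ∈ range (n + 1), (∑ m ∈ Ico k (n + 1), m.choose i) * w n (k + 1) +
          ∑ k ∈ range (n + 1), k.choose (i + 1) * w n (k + 1) := by
        simp_rw [sum_mul]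
        rw [sum_comm' (t' := range (n + 1)) (s' := fun k => Ico k (n + 1)), hb]
        intro m k
        simp only [mem_range, mem_Ico]
        omega
    _ = ∑ k ∈ range (n + 1), (n + 1).choose (i + 1) * w n (k + 1) := by
        rw [← sum_add_distrib]
        refine sum_congr rfl fun k hk => ?_
        rw [← add_mul, sum_Ico_choose_add_choose i (mem_range.1 hk).le]
    _ = (n + 1).choose (i + 1) * b n 0 := by
        simp only [← mul_sum, hb 0, Nat.choose_zero_right, one_mul]

lemma choose_two_mul_add_mul_choose (n i : ℕ) :
    (2 * n).choose (n + i) * (n + i).choose i = (2 * n).choose n * n.choose i := by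
  rw [← Nat.choose_symm_add, Nat.choose_mul (Nat.le_add_right n i), two_mul,
    Nat.add_sub_cancel, Nat.add_sub_cancel_left]

-- For `i < n` this is `binom(2n, n-i-1) * binom(n+i-1, i)` by symmetry, and for `n ≤ i` the
-- first factor vanishes.
def closedForm (n i : ℕ) : ℕ := (2 * n).choose (n + i + 1) * (n + i - 1).choose i

lemma closedForm_succ_mul (n i : ℕ) :
    closedForm (n + 1) i * ((n + i + 2) * (n + i + 1)) =
      (2 * n + 2) * (2 * n + 1) * ((2 * n).choose n * n.choose i) := by
  rw [closedForm, ← choose_two_mul_add_mul_choose, show 2 * (n + 1) = 2 * n + 1 + 1 by ring,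
    show n + 1 + i + 1 = n + i + 1 + 1 by ring, show n + 1 + i - 1 = n + i by omega]
  calc _ = (2 * n + 1 + 1).choose (n + i + 1 + 1) * (n + i + 1 + 1) * (n + i + 1) *
        (n + i).choose i := by ring
    _ = (2 * n + 2) * ((2 * n + 1).choose (n + i + 1) * (n + i + 1)) * (n + i).choose i := by
        rw [← Nat.add_one_mul_choose_eq]; ring
    _ = _ := by rw [← Nat.add_one_mul_choose_eq]; ring

lemma closedForm_add_one_mul (n i : ℕ) :
    closedForm n (i + 1) * ((n + i + 2) * (n + i + 1) * (i + 1)) =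
      (n - i) * (n - i - 1) * n * ((2 * n).choose n * n.choose i) := by
  rw [closedForm, ← choose_two_mul_add_mul_choose, show n + (i + 1) + 1 = n + i + 1 + 1 by ring,
    show n + (i + 1) - 1 = n + i by omega]
  calc _ = (2 * n).choose (n + i + 1 + 1) * (n + i + 1 + 1) * (n + i + 1) *
        ((n + i).choose (i + 1) * (i + 1)) := by ring
    _ = (2 * n).choose (n + i + 1) * (n + i + 1) * (2 * n - (n + i + 1)) *
        ((n + i).choose i * (n + i - i)) := by
        rw [Nat.choose_succ_right_eq, Nat.choose_succ_right_eq]; ring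
    _ = (2 * n - (n + i)) * (2 * n - (n + i + 1)) * (n + i - i) *
        ((2 * n).choose (n + i) * (n + i).choose i) := by rw [Nat.choose_succ_right_eq]; ring
    _ = _ := by
        rw [show 2 * n - (n + i) = n - i by omega, show 2 * n - (n + i + 1) = n - i - 1 by omega,
          Nat.add_sub_cancel]

lemma choose_mul_closedForm_zero_mul (n i : ℕ) :
    (n + 1).choose (i + 1) * closedForm n 0 * (i + 1) = n * ((2 * n).choose n * n.choose i) := by
  rw [closedForm, Nat.add_zero, Nat.choose_zero_right, mul_one]
  refine Nat.eq_of_mul_eq_mul_left (by positivity : 0 < n + 1) ?_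
  calc _ = (n + 1).choose (i + 1) * (i + 1) * ((2 * n).choose (n + 1) * (n + 1)) := by ring
    _ = (n + 1) * n.choose i * ((2 * n).choose n * (2 * n - n)) := by
        rw [← Nat.add_one_mul_choose_eq, Nat.choose_succ_right_eq]
    _ = _ := by rw [two_mul, Nat.add_sub_cancel]; ring

-- Multiplied by `(n+i+2)(n+i+1)(i+1)`, each term becomes a polynomial multiple of
-- `binom(2n, n) * binom(n, i)`.
lemma closedForm_succ_add (n i : ℕ) :
    n * closedForm (n + 1) i + (n + 1) * closedForm n (i + 1) =
      (n + 1) * (n + 1).choose (i + 1) * closedForm n 0 := by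
  obtain ⟨X, hX⟩ : ∃ X, (2 * n).choose n * n.choose i = X := ⟨_, rfl⟩
  have hpoly : X * ((i + 1) * ((2 * n + 2) * (2 * n + 1)) + (n + 1) * ((n - i) * (n - i - 1))) =
      X * ((n + 1) * ((n + i + 2) * (n + i + 1))) := by
    rcases le_or_gt i n with hi | hi
    · obtain ⟨d, rfl⟩ := Nat.exists_eq_add_of_le hi
      rw [Nat.add_sub_cancel_left]
      rcases d with _ | d
      · ring
      · rw [Nat.add_sub_cancel]
        ring
    · rw [← hX, Nat.choose_eq_zero_of_lt hi, mul_zero, zero_mul, zero_mul]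
  refine Nat.eq_of_mul_eq_mul_right (m := (n + i + 2) * (n + i + 1) * (i + 1)) (by positivity) ?_
  calc _ = n * (i + 1) * (closedForm (n + 1) i * ((n + i + 2) * (n + i + 1))) +
        (n + 1) * (closedForm n (i + 1) * ((n + i + 2) * (n + i + 1) * (i + 1))) := by ring
    _ = n * (X * ((i + 1) * ((2 * n + 2) * (2 * n + 1)) + (n + 1) * ((n - i) * (n - i - 1)))) := by
        rw [closedForm_succ_mul, closedForm_add_one_mul, hX]; ring
    _ = (n + 1) * ((n + i + 2) * (n + i + 1)) *
        ((n + 1).choose (i + 1) * closedForm n 0 * (i + 1)) := by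
        rw [hpoly, choose_mul_closedForm_zero_mul, hX]; ring
    _ = _ := by ring

lemma mul_b_eq_closedForm {n : ℕ} (hn : 1 ≤ n) (i : ℕ) : n * b n i = closedForm n i := by
  induction n, hn using Nat.le_induction generalizing i with
  | base =>
    rcases i with _ | i
    · simp [b, closedForm, w_one_one]
    · rw [closedForm, Nat.choose_eq_zero_of_lt (by omega : 2 * 1 < 1 + (i + 1) + 1), zero_mul]
      simp [b]
  | succ n hn ih =>
    refine Nat.eq_of_mul_eq_mul_left hn
      (Nat.add_right_cancel (m := (n + 1) * closedForm n (i + 1)) ?_)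
    calc n * ((n + 1) * b (n + 1) i) + (n + 1) * closedForm n (i + 1)
        = n * (n + 1) * (b (n + 1) i + b n (i + 1)) := by rw [← ih]; ring
      _ = (n + 1) * (n + 1).choose (i + 1) * closedForm n 0 := by rw [b_succ_add hn, ← ih]; ring
      _ = _ := (closedForm_succ_add n i).symm

/-- Closed form: `n·b_i(n) = binom(2n, n-i-1)·binom(n+i-1, i)` for `n ≥ 1`
and all `i ≥ 0` (with the convention `binom(a,b) = 0` for `b < 0`, i.e. the
right side vanishes when `i ≥ n`). -/
theorem betti_closed_form (n : ℕ) (hn : 1 ≤ n) (i : ℕ) :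
    n * b n i =
      if n ≤ i then 0
      else Nat.choose (2 * n) (n - i - 1) * Nat.choose (n + i - 1) i := by
  rw [mul_b_eq_closedForm hn, closedForm]
  split_ifs with h
  · rw [Nat.choose_eq_zero_of_lt (by omega), zero_mul]
  · rw [Nat.choose_symm_of_eq_add (by omega : 2 * n = n + i + 1 + (n - i - 1))]
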